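/- Fix b > 1. Let Y be uniformly distributed on [1,b] and let X = log_b Y. Then for every positive integer n, δ(nX mod 1, U[0,1)) < (ln b)/(2√12 · n). -/

import Mathlib

/-!
Put `t = (ln b)/n`, so that `nX = (ln Y)/t`. The event `{nX mod 1 ≤ x}` is the union of the `n`
disjoint intervals `[e^{tk}, e^{t(k+x)}]`, whose total length is a geometric sum; hence
`nX mod 1` has the density `g(u) = t e^{tu}/(e^t - 1)` on `[0,1)`. For a density `g` with respect
to a probability measure, `δ ≤ ½ ∫ |g - 1| ≤ ½ √(Var g)` by Cauchy–Schwarz, and here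
`Var g = t(e^t + 1)/(2(e^t - 1)) - 1 < t²/12`: the function `(t² - 6t + 12) e^t - (t² + 6t + 12)`
has Taylor coefficients `(m - 3)(m - 4)/m! ≥ 0`.
-/

open MeasureTheory ProbabilityTheory Set

/-- Total variation distance between two measures on `ℝ`:
`sup { |μ A − ν A| : A Borel }`. -/
noncomputable def tvDist (μ ν : MeasureTheory.Measure ℝ) : ℝ :=
  ⨆ A : {A : Set ℝ // MeasurableSet A}, |(μ A.1).toReal - (ν A.1).toReal|

/-- The uniform distribution on a set `s ⊆ ℝ`. -/
noncomputable def unifMeasure (s : Set ℝ) : MeasureTheory.Measure ℝ :=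
  (volume s)⁻¹ • volume.restrict s

open Real

section TotalVariation

variable {Ω : Type*} [MeasurableSpace Ω] {μ : Measure Ω} {f : Ω → ℝ}

lemma abs_setIntegral_le_half_integral_abs (hf : Integrable f μ) (h0 : ∫ x, f x ∂μ = 0)
    {A : Set Ω} (hA : MeasurableSet A) : |∫ x in A, f x ∂μ| ≤ (∫ x, |f x| ∂μ) / 2 := by
  have hsplit := integral_add_compl hA hf
  have hsplit_abs := integral_add_compl hA hf.abs
  have hA_le : |∫ x in A, f x ∂μ| ≤ ∫ x in A, |f x| ∂μ :=
    abs_integral_le_integral_abs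
  have hAc_le : |∫ x in Aᶜ, f x ∂μ| ≤ ∫ x in Aᶜ, |f x| ∂μ :=
    abs_integral_le_integral_abs
  rw [show ∫ x in Aᶜ, f x ∂μ = -∫ x in A, f x ∂μ by linarith, abs_neg] at hAc_le
  linarith

lemma sq_integral_abs_le_integral_sq [IsProbabilityMeasure μ] (hf : MemLp f 2 μ) :
    (∫ x, |f x| ∂μ) ^ 2 ≤ ∫ x, f x ^ 2 ∂μ := by
  have := variance_nonneg |f| μ
  rw [variance_eq_sub hf.abs] at this
  simpa [sq_abs] using this

lemma tvDist_withDensity_le_sqrt_variance {μ : Measure ℝ} [IsProbabilityMeasure μ]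
    {f : ℝ → ℝ} (hf_nonneg : ∀ x, 0 ≤ f x) (hf : MemLp f 2 μ) (hf_one : ∫ x, f x ∂μ = 1) :
    tvDist (μ.withDensity fun x => ENNReal.ofReal (f x)) μ ≤ √(Var[f; μ]) / 2 := by
  have hint : Integrable f μ := hf.integrable one_le_two
  have hvar : Var[f; μ] = ∫ x, (f x - 1) ^ 2 ∂μ := by
    rw [variance_eq_integral hf.aemeasurable, hf_one]
  have hmean : ∫ x, (f x - 1) ∂μ = 0 := by
    rw [integral_sub hint (integrable_const 1), hf_one]; simp
  refine ciSup_le fun ⟨A, hA⟩ => ?_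
  have hdiff : ((μ.withDensity fun x => ENNReal.ofReal (f x)) A).toReal - (μ A).toReal
      = ∫ x in A, (f x - 1) ∂μ := by
    rw [withDensity_apply _ hA, ← ofReal_integral_eq_lintegral_ofReal hint.integrableOn
      (.of_forall hf_nonneg), ENNReal.toReal_ofReal (integral_nonneg hf_nonneg),
      integral_sub hint.integrableOn (integrable_const 1), setIntegral_const, smul_eq_mul,
      mul_one, measureReal_def]
  rw [hdiff, hvar]
  calc |∫ x in A, (f x - 1) ∂μ| ≤ (∫ x, |f x - 1| ∂μ) / 2 :=
        abs_setIntegral_le_half_integral_abs (hint.sub (integrable_const 1)) hmean hA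
    _ ≤ √(∫ x, (f x - 1) ^ 2 ∂μ) / 2 := by
        gcongr
        exact (le_abs_self _).trans
          (abs_le_sqrt (sq_integral_abs_le_integral_sq (hf.sub (memLp_const 1))))

end TotalVariation

lemma six_mul_mul_exp_add_one_lt {t : ℝ} (ht : 0 < t) :
    6 * t * (exp t + 1) < (t ^ 2 + 12) * (exp t - 1) := by
  have htaylor := sum_le_exp_of_nonneg ht.le 7
  simp only [Finset.sum_range_succ, Finset.sum_range_zero, Nat.factorial] at htaylor
  norm_num at htaylor
  have hq : 0 < t ^ 2 - 6 * t + 12 := by nlinarith [sq_nonneg (t - 3)]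
  nlinarith [mul_le_mul_of_nonneg_left htaylor hq.le, pow_pos ht 5, pow_pos ht 6, pow_pos ht 8]

lemma integral_exp_mul {t : ℝ} (ht : t ≠ 0) (x : ℝ) :
    ∫ u in 0..x, exp (t * u) = (exp (t * x) - 1) / t := by
  rw [intervalIntegral.integral_comp_mul_left (fun u => exp u) ht, integral_exp, mul_zero,
    exp_zero, smul_eq_mul, inv_mul_eq_div]

lemma setIntegral_Ico_eq_intervalIntegral {a b : ℝ} (hab : a ≤ b) (f : ℝ → ℝ) :
    ∫ u in Ico a b, f u = ∫ u in a..b, f u := by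
  rw [integral_Ico_eq_integral_Ioc, intervalIntegral.integral_of_le hab]

instance : IsProbabilityMeasure (volume.restrict (Ico (0 : ℝ) 1)) := ⟨by simp⟩

noncomputable def truncExpDensity (t u : ℝ) : ℝ := t * exp (t * u) / (exp t - 1)

section TruncExpDensity

variable {t : ℝ}

lemma truncExpDensity_nonneg (t u : ℝ) : 0 ≤ truncExpDensity t u := by
  rw [truncExpDensity, mul_div_right_comm]
  refine mul_nonneg ?_ (exp_pos _).le
  rcases le_total 0 t with ht | ht
  · exact div_nonneg ht (by linarith [add_one_le_exp t])
  · exact div_nonneg_of_nonpos ht (by linarith [exp_le_one_iff.2 ht])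

@[fun_prop]
lemma continuous_truncExpDensity (t : ℝ) : Continuous (truncExpDensity t) := by
  unfold truncExpDensity; fun_prop

lemma integral_truncExpDensity (ht : t ≠ 0) (x : ℝ) :
    ∫ u in 0..x, truncExpDensity t u = (exp (t * x) - 1) / (exp t - 1) := by
  simp only [truncExpDensity, intervalIntegral.integral_div, intervalIntegral.integral_const_mul,
    integral_exp_mul ht]
  field_simp

lemma integral_truncExpDensity_sq (ht : t ≠ 0) :
    ∫ u in 0..1, truncExpDensity t u ^ 2 = t * (exp t + 1) / (2 * (exp t - 1)) := by
  have hE : exp t - 1 ≠ 0 := by simpa [sub_eq_zero] using ht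
  have hsq : ∀ u, truncExpDensity t u ^ 2 = t ^ 2 / (exp t - 1) ^ 2 * exp (2 * t * u) := by
    intro u
    rw [truncExpDensity, div_pow, mul_pow, ← exp_nat_mul]
    ring_nf
  simp only [hsq, intervalIntegral.integral_const_mul,
    integral_exp_mul (mul_ne_zero two_ne_zero ht), mul_one]
  rw [show 2 * t = t + t by ring, exp_add]
  field_simp
  ring

lemma integral_truncExpDensity_Ico (ht : t ≠ 0) :
    ∫ u in Ico 0 1, truncExpDensity t u = 1 := by
  have hE : exp t - 1 ≠ 0 := by simpa [sub_eq_zero] using ht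
  rw [setIntegral_Ico_eq_intervalIntegral zero_le_one, integral_truncExpDensity ht, mul_one,
    div_self hE]

lemma memLp_truncExpDensity (t : ℝ) :
    MemLp (truncExpDensity t) 2 (volume.restrict (Ico 0 1)) :=
  (memLp_two_iff_integrable_sq (by fun_prop)).2 <|
    ((continuous_truncExpDensity t).pow 2).integrableOn_Icc.mono_set Ico_subset_Icc_self

lemma variance_truncExpDensity_lt (ht : 0 < t) :
    Var[truncExpDensity t; volume.restrict (Ico 0 1)] < t ^ 2 / 12 := by
  have hE : 0 < exp t - 1 := by linarith [add_one_lt_exp ht.ne']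
  rw [variance_eq_sub (memLp_truncExpDensity t), integral_truncExpDensity_Ico ht.ne']
  simp only [Pi.pow_apply]
  rw [setIntegral_Ico_eq_intervalIntegral zero_le_one, integral_truncExpDensity_sq ht.ne',
    one_pow, div_sub_one (by positivity), div_lt_div_iff₀ (by positivity) (by norm_num)]
  nlinarith [six_mul_mul_exp_add_one_lt ht]

end TruncExpDensity

lemma isProbabilityMeasure_unifMeasure {s : Set ℝ} (h0 : volume s ≠ 0) (htop : volume s ≠ ⊤) :
    IsProbabilityMeasure (unifMeasure s) :=
  ⟨by simp [unifMeasure, ENNReal.inv_mul_cancel h0 htop]⟩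

lemma unifMeasure_Ico_zero_one : unifMeasure (Ico 0 1) = volume.restrict (Ico (0 : ℝ) 1) := by
  simp [unifMeasure]

lemma Ico_inter_fract_le_eq (n : ℕ) {x : ℝ} (hx : x < 1) :
    Ico (0 : ℝ) n ∩ {z | Int.fract z ≤ x} = ⋃ k ∈ Finset.range n, Icc (k : ℝ) (k + x) := by
  ext z
  simp only [mem_inter_iff, mem_Ico, mem_ofPred_eq, mem_iUnion, mem_Icc, Finset.mem_range,
    exists_prop]
  constructor
  · rintro ⟨⟨hz0, hzn⟩, hfract⟩
    refine ⟨⌊z⌋₊, (Nat.floor_lt hz0).2 hzn, Nat.floor_le hz0, ?_⟩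
    rw [natCast_floor_eq_intCast_floor hz0]
    linarith [Int.self_sub_floor z]
  · rintro ⟨k, hkn, hkz, hzk⟩
    have hkn' : (k : ℝ) + 1 ≤ n := by exact_mod_cast hkn
    have hfloor : ⌊z⌋ = k := by
      rw [Int.floor_eq_iff]; push_cast; constructor <;> linarith
    refine ⟨⟨(Nat.cast_nonneg k).trans hkz, by linarith⟩, ?_⟩
    rw [← Int.self_sub_floor, hfloor]
    push_cast; linarith

section LogScale

variable {t y : ℝ} {n : ℕ}

lemma exp_mul_le_iff (ht : 0 < t) (hy : 0 < y) (a : ℝ) :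
    exp (t * a) ≤ y ↔ a ≤ log y / t := by
  rw [le_div_iff₀ ht, mul_comm, le_log_iff_exp_le hy]

lemma le_exp_mul_iff (ht : 0 < t) (hy : 0 < y) (a : ℝ) :
    y ≤ exp (t * a) ↔ log y / t ≤ a := by
  rw [div_le_iff₀ ht, mul_comm a, log_le_iff_le_exp hy]

lemma lt_exp_mul_iff (ht : 0 < t) (hy : 0 < y) (a : ℝ) :
    y < exp (t * a) ↔ log y / t < a := by
  rw [div_lt_iff₀ ht, mul_comm a, log_lt_iff_lt_exp hy]

lemma one_lt_exp_mul_natCast (ht : 0 < t) (hn : n ≠ 0) : 1 < exp (t * n) :=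
  one_lt_exp_iff.2 (by positivity)

lemma Ico_inter_fract_log_div_le_eq (ht : 0 < t) (n : ℕ) {x : ℝ} (hx : x < 1) :
    Ico 1 (exp (t * n)) ∩ {y | Int.fract (log y / t) ≤ x}
      = ⋃ k ∈ Finset.range n, Icc (exp (t * k)) (exp (t * (k + x))) := by
  ext y
  rcases le_or_gt y 0 with hy | hy
  · simp only [mem_inter_iff, mem_Ico, mem_iUnion, mem_Icc, exists_prop]
    constructor
    · rintro ⟨⟨h1, -⟩, -⟩; linarith
    · rintro ⟨k, -, hk, -⟩; linarith [exp_pos (t * k)]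
  have hz := congrArg (log y / t ∈ ·) (Ico_inter_fract_le_eq n hx)
  have hone : 1 ≤ y ↔ 0 ≤ log y / t := by simpa using exp_mul_le_iff ht hy 0
  simp only [eq_iff_iff, mem_inter_iff, mem_Ico, mem_ofPred_eq, mem_iUnion, mem_Icc,
    Finset.mem_range, exists_prop] at hz ⊢
  simpa only [hone, lt_exp_mul_iff ht hy, exp_mul_le_iff ht hy, le_exp_mul_iff ht hy] using hz

lemma volume_biUnion_Icc_exp_mul (ht : 0 < t) (n : ℕ) {x : ℝ} (hx0 : 0 ≤ x) (hx1 : x < 1) :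
    volume (⋃ k ∈ Finset.range n, Icc (exp (t * k)) (exp (t * (k + x))))
      = ENNReal.ofReal ((exp (t * x) - 1) / (exp t - 1) * (exp (t * n) - 1)) := by
  have hE : exp t ≠ 1 := by simpa using ht.ne'
  have hdisj : Pairwise
      (Function.onFun Disjoint fun k : ℕ => Icc (exp (t * k)) (exp (t * (k + x)))) := by
    refine (pairwise_disjoint_on _).2 fun i j hij => disjoint_left.2 fun y hi hj => ?_
    have hij' : (i : ℝ) + 1 ≤ j := by exact_mod_cast hij
    have : exp (t * (i + x)) < exp (t * j) := exp_lt_exp.2 (by nlinarith)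
    linarith [hi.2, hj.1]
  have hlen : ∀ k : ℕ, exp (t * (k + x)) - exp (t * k) = (exp (t * x) - 1) * exp t ^ k := by
    intro k
    rw [← exp_nat_mul, mul_add, exp_add, mul_comm (k : ℝ) t]
    ring
  rw [measure_biUnion_finset (hdisj.set_pairwise _) fun k _ => measurableSet_Icc]
  simp only [volume_Icc, hlen]
  rw [← ENNReal.ofReal_sum_of_nonneg fun k _ => ?_, ← Finset.mul_sum, geom_sum_eq hE,
    ← exp_nat_mul, mul_comm (n : ℝ) t]
  · ring_nf
  · exact mul_nonneg (by linarith [one_le_exp (mul_nonneg ht.le hx0)]) (by positivity)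

lemma unifMeasure_fract_log_div_le (ht : 0 < t) (hn : n ≠ 0) {x : ℝ} (hx0 : 0 ≤ x)
    (hx1 : x < 1) :
    unifMeasure (Icc 1 (exp (t * n))) {y | Int.fract (log y / t) ≤ x}
      = ENNReal.ofReal ((exp (t * x) - 1) / (exp t - 1)) := by
  have hB : 0 < exp (t * n) - 1 := by linarith [one_lt_exp_mul_natCast ht hn]
  have hq : 0 ≤ (exp (t * x) - 1) / (exp t - 1) :=
    div_nonneg (by linarith [one_le_exp (mul_nonneg ht.le hx0)])
      (by linarith [add_one_lt_exp ht.ne'])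
  rw [unifMeasure, Measure.smul_apply, smul_eq_mul, Measure.restrict_apply' measurableSet_Icc,
    volume_Icc, measure_congr ((ae_eq_refl _).inter Ico_ae_eq_Icc).symm, inter_comm,
    Ico_inter_fract_log_div_le_eq ht n hx1, volume_biUnion_Icc_exp_mul ht n hx0 hx1,
    ENNReal.ofReal_mul hq, mul_comm, mul_assoc,
    ENNReal.mul_inv_cancel (ENNReal.ofReal_pos.2 hB).ne' ENNReal.ofReal_ne_top, mul_one]

lemma map_fract_log_div_unifMeasure (ht : 0 < t) (hn : n ≠ 0) :
    (unifMeasure (Icc 1 (exp (t * n)))).map (fun y => Int.fract (log y / t))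
      = (volume.restrict (Ico 0 1)).withDensity
          fun u => ENNReal.ofReal (truncExpDensity t u) := by
  have hmeas : Measurable fun y => Int.fract (log y / t) := (measurable_log.div_const t).fract
  have : IsProbabilityMeasure (unifMeasure (Icc 1 (exp (t * n)))) :=
    isProbabilityMeasure_unifMeasure (by simpa using one_lt_exp_mul_natCast ht hn) (by simp)
  have hint : IntegrableOn (truncExpDensity t) (Icc 0 1) :=
    (continuous_truncExpDensity t).integrableOn_Icc
  refine Measure.ext_of_Iic _ _ fun x => ?_
  rw [Measure.map_apply hmeas measurableSet_Iic, withDensity_apply _ measurableSet_Iic,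
    Measure.restrict_restrict measurableSet_Iic]
  simp only [preimage, mem_Iic]
  rcases lt_or_ge x 0 with hx0 | hx0
  · have hpre : {y | Int.fract (log y / t) ≤ x} = ∅ :=
      eq_empty_of_forall_notMem fun y hy => (Int.fract_nonneg _).not_gt (hx0.trans_le' hy)
    have hset : Iic x ∩ Ico 0 1 = ∅ := by
      ext u; simp only [mem_inter_iff, mem_Iic, mem_Ico, mem_empty_iff_false, iff_false]; grind
    simp [hpre, hset]
  rcases lt_or_ge x 1 with hx1 | hx1
  · have hset : Iic x ∩ Ico 0 1 = Icc 0 x := by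
      ext u; simp only [mem_inter_iff, mem_Iic, mem_Ico, mem_Icc]; grind
    rw [unifMeasure_fract_log_div_le ht hn hx0 hx1, hset, ← ofReal_integral_eq_lintegral_ofReal
      (hint.mono_set (Icc_subset_Icc_right hx1.le)) (.of_forall (truncExpDensity_nonneg t)),
      integral_Icc_eq_integral_Ioc, ← intervalIntegral.integral_of_le hx0,
      integral_truncExpDensity ht.ne']
  · have hpre : {y | Int.fract (log y / t) ≤ x} = univ :=
      eq_univ_of_forall fun y => (Int.fract_lt_one _).le.trans hx1
    have hset : Iic x ∩ Ico 0 1 = Ico 0 1 := inter_eq_right.2 fun u hu => hu.2.le.trans hx1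
    rw [hpre, measure_univ, hset, ← ofReal_integral_eq_lintegral_ofReal
      (hint.mono_set Ico_subset_Icc_self) (.of_forall (truncExpDensity_nonneg t)),
      integral_truncExpDensity_Ico ht.ne', ENNReal.ofReal_one]

end LogScale

theorem stmt13_general {Ω : Type*} [MeasureSpace Ω]
    (b : ℝ) (hb : 1 < b) (Y : Ω → ℝ) (hY : Measurable Y)
    (hYunif : Measure.map Y (ℙ : Measure Ω) = unifMeasure (Set.Icc 1 b))
    (X : Ω → ℝ) (hX : X = fun ω => Real.logb b (Y ω))
    (n : ℕ) (hn : 0 < n) :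
    tvDist (Measure.map (fun ω => Int.fract ((n : ℝ) * X ω)) (ℙ : Measure Ω))
        (unifMeasure (Set.Ico 0 1)) < Real.log b / (2 * Real.sqrt 12 * n) := by
  subst hX
  set t := log b / n with ht_def
  have ht : 0 < t := div_pos (log_pos hb) (by exact_mod_cast hn)
  have hb_eq : exp (t * n) = b := by
    rw [ht_def, div_mul_cancel₀ _ (by positivity), exp_log (by linarith)]
  have hfun : (fun ω => Int.fract ((n : ℝ) * logb b (Y ω)))
      = (fun y => Int.fract (log y / t)) ∘ Y := by
    funext ω
    rw [Function.comp_apply, logb, ht_def, div_div_eq_mul_div, mul_div_right_comm, mul_comm]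
  rw [← hb_eq] at hYunif
  rw [hfun, ← Measure.map_map (measurable_log.div_const t).fract hY, hYunif,
    map_fract_log_div_unifMeasure ht hn.ne', unifMeasure_Ico_zero_one]
  calc _ ≤ √(Var[truncExpDensity t; volume.restrict (Ico 0 1)]) / 2 :=
        tvDist_withDensity_le_sqrt_variance (truncExpDensity_nonneg t) (memLp_truncExpDensity t)
          (integral_truncExpDensity_Ico ht.ne')
    _ < √(t ^ 2 / 12) / 2 := by
        gcongr
        exacts [variance_nonneg _ _, variance_truncExpDensity_lt ht]
    _ = log b / (2 * √12 * n) := by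
        rw [sqrt_div' _ (by norm_num), sqrt_sq ht.le, ht_def]
        field_simp

/-- (Boyle) For `b > 1`, `Y ∼ U[1,b]` and `X = log_b Y`:
`δ(nX mod 1, U[0,1)) < (ln b)/(2√12 · n)` for all positive integers `n`. -/
theorem stmt13 {Ω : Type*} [MeasureSpace Ω] [IsProbabilityMeasure (ℙ : Measure Ω)]
    (b : ℝ) (hb : 1 < b) (Y : Ω → ℝ) (hY : Measurable Y)
    (hYunif : Measure.map Y (ℙ : Measure Ω) = unifMeasure (Set.Icc 1 b))
    (X : Ω → ℝ) (hX : X = fun ω => Real.logb b (Y ω))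
    (n : ℕ) (hn : 0 < n) :
    tvDist (Measure.map (fun ω => Int.fract ((n : ℝ) * X ω)) (ℙ : Measure Ω))
        (unifMeasure (Set.Ico 0 1)) < Real.log b / (2 * Real.sqrt 12 * n) :=
  stmt13_general b hb Y hY hYunif X hX n hn
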